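/- Suppose n ≥ 1 and m is a positive even integer such that there exists a positive semidefinite form of degree m in n variables which is not a sum of squares of polynomials. Then there does not exist a finite set {h_1, …, h_N} of nonzero real forms in n variables with the property that for every positive semidefinite form p of degree m in n variables, some product h_k·p is a sum of squares of polynomials. Equivalently: for every finite set of nonzero forms h_1,…,h_N in n variables there exists a positive semidefinite form p of degree m in n variables such that h_k·p is not a sum of squares for every k = 1,…,N. -/

import Mathlib

open MvPolynomial

/-- A real polynomial is a sum of squares (sos) if it equals a finite sum of squares
of real polynomials. -/
def IsSos {n : ℕ} (p : MvPolynomial (Fin n) ℝ) : Prop :=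
  ∃ (k : ℕ) (g : Fin k → MvPolynomial (Fin n) ℝ), p = ∑ i, g i ^ 2

/-- A real polynomial is positive semidefinite (psd) if it takes nonnegative values
at every real point. -/
def Psd {n : ℕ} (p : MvPolynomial (Fin n) ℝ) : Prop :=
  ∀ x : Fin n → ℝ, 0 ≤ eval x p

open Filter Metric

namespace SosAux


variable {n : ℕ}

lemma sos_zero : IsSos (0 : MvPolynomial (Fin n) ℝ) :=
  ⟨0, fun i => 0, by simp⟩

lemma sos_map (φ : MvPolynomial (Fin n) ℝ →ₐ[ℝ] MvPolynomial (Fin n) ℝ)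
    {p : MvPolynomial (Fin n) ℝ} (hp : IsSos p) : IsSos (φ p) := by
  obtain ⟨k, g, rfl⟩ := hp
  exact ⟨k, fun i => φ (g i), by simp [map_sum, map_pow]⟩

lemma sos_psd {p : MvPolynomial (Fin n) ℝ} (hp : IsSos p) : Psd p := by
  obtain ⟨k, g, rfl⟩ := hp
  intro x
  simp only [map_sum, map_pow]
  exact Finset.sum_nonneg fun i _ => sq_nonneg _

lemma exists_eval_ne {p : MvPolynomial (Fin n) ℝ} (hp : p ≠ 0) : ∃ x, eval x p ≠ 0 := by
  by_contra hc
  push_neg at hc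
  exact hp (MvPolynomial.funext fun x => by simp [hc x])

lemma sq_sum_eq_zero {k : ℕ} {g : Fin k → MvPolynomial (Fin n) ℝ}
    (h : ∑ i, g i ^ 2 = 0) (i : Fin k) : g i = 0 := by
  apply MvPolynomial.funext
  intro x
  have h0 : ∑ j, (eval x (g j)) ^ 2 = 0 := by
    have := congrArg (eval x) h
    simpa [map_sum, map_pow] using this
  have h1 := (Finset.sum_eq_zero_iff_of_nonneg (fun j _ => sq_nonneg (eval x (g j)))).mp h0
    i (Finset.mem_univ i)
  have h2 := (pow_eq_zero_iff two_ne_zero).mp h1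
  rw [map_zero, h2]

lemma sos_C_mul {a : ℝ} (ha : 0 ≤ a) {p : MvPolynomial (Fin n) ℝ} (hp : IsSos p) :
    IsSos (C a * p) := by
  obtain ⟨k, g, rfl⟩ := hp
  refine ⟨k, fun i => C (Real.sqrt a) * g i, ?_⟩
  rw [Finset.mul_sum]
  refine Finset.sum_congr rfl fun i _ => ?_
  rw [mul_pow, ← map_pow, Real.sq_sqrt ha]

lemma sos_of_fintype {J : Type*} [Fintype J] (g : J → MvPolynomial (Fin n) ℝ) :
    IsSos (∑ j, g j ^ 2) := by
  refine ⟨Fintype.card J, fun i => g ((Fintype.equivFin J).symm i), ?_⟩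
  rw [← Equiv.sum_comp (Fintype.equivFin J).symm (fun j => g j ^ 2)]

lemma eval_aeval' (x : Fin n → ℝ) (g : Fin n → MvPolynomial (Fin n) ℝ)
    (p : MvPolynomial (Fin n) ℝ) :
    eval x (aeval g p) = eval (fun i => eval x (g i)) p := by
  rw [aeval_eq_bind₁, hom_bind₁]
  rw [show ((eval x).comp (C : ℝ →+* MvPolynomial (Fin n) ℝ)) = RingHom.id ℝ by
    ext r; simp]
  rfl

lemma dvd_sub_aeval (i₀ : Fin n) (g : MvPolynomial (Fin n) ℝ) :
    X i₀ ∣ g - aeval (fun i => if i = i₀ then (0 : MvPolynomial (Fin n) ℝ) else X i) g := by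
  set s0 : Fin n → MvPolynomial (Fin n) ℝ := fun i => if i = i₀ then 0 else X i with hs0
  induction g using MvPolynomial.induction_on with
  | C a => simp
  | add p q hp hq =>
      have h := dvd_add hp hq
      have e : p - aeval s0 p + (q - aeval s0 q) = p + q - aeval s0 (p + q) := by
        rw [map_add]; ring
      rwa [e] at h
  | mul_X p i hp =>
      rw [map_mul, aeval_X]
      by_cases hi : i = i₀
      · subst hi
        have e : (s0 i : MvPolynomial (Fin n) ℝ) = 0 := by simp [hs0]
        rw [e, mul_zero, sub_zero]
        exact dvd_mul_left (X i) p
      · have e : (s0 i : MvPolynomial (Fin n) ℝ) = X i := by simp [hs0, hi]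
        rw [e]
        have e2 : p * X i - aeval s0 p * X i = (p - aeval s0 p) * X i := by ring
        rw [e2]
        exact hp.mul_right _

lemma dvd_of_vanish (i₀ : Fin n) (g : MvPolynomial (Fin n) ℝ)
    (hv : ∀ x : Fin n → ℝ, x i₀ = 0 → eval x g = 0) : X i₀ ∣ g := by
  set s0 : Fin n → MvPolynomial (Fin n) ℝ := fun i => if i = i₀ then 0 else X i with hs0
  have hg0 : aeval s0 g = 0 := by
    apply MvPolynomial.funext
    intro x
    rw [eval_aeval', (eval x).map_zero]
    apply hv
    simp [hs0]
  have := dvd_sub_aeval i₀ g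
  rw [← hs0] at this
  rwa [hg0, sub_zero] at this

lemma sos_of_X_sq_mul (i₀ : Fin n) {p : MvPolynomial (Fin n) ℝ}
    (hp : IsSos (X i₀ ^ 2 * p)) : IsSos p := by
  obtain ⟨k, g, hg⟩ := hp
  have hvan : ∀ j, X i₀ ∣ g j := by
    intro j
    apply dvd_of_vanish
    intro x hx
    have h0 : ∑ j', (eval x (g j')) ^ 2 = 0 := by
      have := congrArg (eval x) hg
      simp only [map_sum, map_pow, map_mul, eval_X, hx] at this
      simpa using this.symm
    have h1 := (Finset.sum_eq_zero_iff_of_nonneg (fun j' _ => sq_nonneg (eval x (g j')))).mp h0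
      j (Finset.mem_univ j)
    exact pow_eq_zero_iff two_ne_zero |>.mp h1
  choose t ht using hvan
  have key : X i₀ ^ 2 * p = X i₀ ^ 2 * ∑ j, t j ^ 2 := by
    rw [hg, Finset.mul_sum]
    refine Finset.sum_congr rfl fun j _ => ?_
    rw [ht j, mul_pow]
  exact ⟨k, t, mul_left_cancel₀ (pow_ne_zero 2 (MvPolynomial.X_ne_zero i₀)) key⟩

lemma sos_of_X_pow_mul (i₀ : Fin n) (r : ℕ) {p : MvPolynomial (Fin n) ℝ}
    (hp : IsSos (X i₀ ^ (2 * r) * p)) : IsSos p := by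
  induction r with
  | zero => simpa using hp
  | succ r ih =>
      apply ih
      apply sos_of_X_sq_mul i₀
      have e : X i₀ ^ 2 * (X (σ := Fin n) i₀ ^ (2 * r) * p) = X i₀ ^ (2 * (r + 1)) * p := by
        ring
      rwa [e]



variable {n : ℕ}


lemma degree_of_coeff {p : MvPolynomial (Fin n) ℝ} {d : ℕ} (hp : p.IsHomogeneous d)
    {v : Fin n →₀ ℕ} (hv : coeff v p ≠ 0) : v.degree = d := by
  rw [Finsupp.degree_eq_weight_one]
  exact hp hv

lemma degree_eq_sum (v : Fin n →₀ ℕ) : (v.sum fun _ e => e) = v.degree := by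
  rfl

lemma hom_eval_smul {p : MvPolynomial (Fin n) ℝ} {d : ℕ} (hp : p.IsHomogeneous d)
    (r : ℝ) (x : Fin n → ℝ) :
    eval (r • x) p = r ^ d * eval x p := by
  conv_lhs => rw [p.as_sum]
  conv_rhs => rw [p.as_sum]
  rw [map_sum, map_sum, Finset.mul_sum]
  refine Finset.sum_congr rfl fun v hv => ?_
  rw [eval_monomial, eval_monomial]
  have hdeg : v.degree = d := degree_of_coeff hp (mem_support_iff.mp hv)
  rw [← hdeg, Finsupp.degree]
  rw [Finsupp.prod, Finsupp.prod]
  simp only [Pi.smul_apply, smul_eq_mul, mul_pow]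
  rw [Finset.prod_mul_distrib, Finset.prod_pow_eq_pow_sum]
  change _ = r ^ (∑ i ∈ v.support, v i) * _
  ring

lemma aeval_line {h : MvPolynomial (Fin n) ℝ} {d : ℕ} (hh : h.IsHomogeneous d)
    (c : Fin n → ℝ) (i₀ : Fin n) :
    aeval (fun i => C (c i) * X i₀) h = C (eval c h) * X i₀ ^ d := by
  conv_lhs => rw [h.as_sum]
  conv_rhs => rw [h.as_sum]
  rw [map_sum, map_sum, map_sum, Finset.sum_mul]
  refine Finset.sum_congr rfl fun v hv => ?_
  rw [aeval_monomial, eval_monomial]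
  have hdeg : v.degree = d := degree_of_coeff hh (mem_support_iff.mp hv)
  rw [Finsupp.prod]
  simp only [mul_pow, ← C_pow]
  rw [Finset.prod_mul_distrib, ← map_prod, Finset.prod_pow_eq_pow_sum]
  have : (∑ i ∈ v.support, v i) = d := by rw [← hdeg]; rfl
  rw [this, map_mul, Finsupp.prod]
  push_cast [algebraMap_eq]
  ring

lemma cont_coeff_aeval (c : Fin n → ℝ) (i₀ : Fin n) (p : MvPolynomial (Fin n) ℝ) :
    ∀ w : Fin n →₀ ℕ, Continuous fun t : ℝ =>
      (coeff w (aeval (fun i => t • X i + ((1 - t) * c i) • X i₀) p) : ℝ) := by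
  induction p using MvPolynomial.induction_on with
  | C a =>
      intro w
      simp only [aeval_C]
      exact continuous_const
  | add p q hp hq =>
      intro w
      simp only [map_add, coeff_add]
      exact (hp w).add (hq w)
  | mul_X p i hp =>
      intro w
      have key : ∀ t : ℝ,
          coeff w (aeval (fun i => t • X i + ((1 - t) * c i) • X i₀) (p * X i))
          = t * (if i ∈ w.support then
              coeff (w - Finsupp.single i 1)
                (aeval (fun i => t • X i + ((1 - t) * c i) • X i₀) p) else 0)
            + ((1 - t) * c i) * (if i₀ ∈ w.support then
              coeff (w - Finsupp.single i₀ 1)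
                (aeval (fun i => t • X i + ((1 - t) * c i) • X i₀) p) else 0) := by
        intro t
        rw [map_mul, aeval_X, mul_add, mul_smul_comm, mul_smul_comm, coeff_add,
          coeff_smul, coeff_smul, coeff_mul_X', coeff_mul_X']
        simp [smul_eq_mul]
      simp only [key]
      apply Continuous.add
      · by_cases hi : i ∈ w.support
        · simp only [if_pos hi]
          exact continuous_id.mul (hp _)
        · simp only [if_neg hi, mul_zero]
          exact continuous_const
      · by_cases hi : i₀ ∈ w.support
        · simp only [if_pos hi]
          exact (((continuous_const.sub continuous_id).mul continuous_const)).mul (hp _)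
        · simp only [if_neg hi, mul_zero]
          exact continuous_const




variable {n e : ℕ}

lemma sos_bounded {e : ℕ} {P : MvPolynomial (Fin n) ℝ} (hs : IsSos P)
    (hd : P.totalDegree ≤ 2 * e) :
    ∃ (k : ℕ) (g : Fin k → MvPolynomial (Fin n) ℝ),
      (∀ j, (g j).totalDegree ≤ e) ∧ P = ∑ j, g j ^ 2 := by
  classical
  obtain ⟨k, g, rfl⟩ := hs
  set μ := Finset.univ.sup fun j => (g j).totalDegree with hμ
  have hle : ∀ j, (g j).totalDegree ≤ μ := fun j => hμ ▸ Finset.le_sup (f := fun j => (g j).totalDegree) (Finset.mem_univ j)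
  by_cases hcase : μ ≤ e
  · exact ⟨k, g, fun j => (hle j).trans hcase, rfl⟩
  exfalso
  push_neg at hcase
  have hne : (Finset.univ : Finset (Fin k)).Nonempty := by
    rcases Finset.univ.eq_empty_or_nonempty (α := Fin k) with h | h
    · exfalso
      rw [h, Finset.sup_empty] at hμ
      rw [show (⊥ : ℕ) = 0 from rfl] at hμ
      omega
    · exact h
  obtain ⟨j₀, _, hj₀⟩ := Finset.exists_mem_eq_sup Finset.univ hne fun j => (g j).totalDegree
  have hgj₀ : g j₀ ≠ 0 := by
    intro h0
    rw [h0, totalDegree_zero] at hj₀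
    omega
  set G := fun j => homogeneousComponent μ (g j) with hG
  have hGj₀ : G j₀ ≠ 0 := by
    obtain ⟨v, hv, hvd⟩ := Finset.exists_mem_eq_sup (g j₀).support
      (support_nonempty.mpr hgj₀) fun s => s.sum fun _ e => e
    have hvdeg : v.degree = μ := by
      have h1 : (g j₀).totalDegree = v.sum fun _ e => e := hvd
      rw [hμ, hj₀, h1]
      rfl
    intro h0
    have : coeff v (G j₀) = coeff v (g j₀) := by
      rw [hG, coeff_homogeneousComponent, if_pos hvdeg]
    rw [h0, coeff_zero] at this
    exact mem_support_iff.mp hv this.symm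
  have hGhom : (∑ j, (G j) ^ 2).IsHomogeneous (μ * 2) := by
    apply IsHomogeneous.sum
    intro j _
    exact (homogeneousComponent_isHomogeneous (n := μ) (φ := g j)).pow 2
  have hGne : (∑ j, (G j) ^ 2) ≠ 0 := fun h0 => hGj₀ (sq_sum_eq_zero h0 j₀)
  obtain ⟨v, hv⟩ := ne_zero_iff.mp hGne
  have hvdeg : v.degree = μ * 2 := degree_of_coeff hGhom hv
  have hcoeff : ∀ j, coeff v (g j ^ 2) = coeff v (G j ^ 2) := by
    intro j
    rw [sq, sq, coeff_mul, coeff_mul]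
    refine Finset.sum_congr rfl fun vv hmem => ?_
    obtain ⟨v1, v2⟩ := vv
    have hadd : v1 + v2 = v := Finset.HasAntidiagonal.mem_antidiagonal.mp hmem
    have hdegadd : v1.degree + v2.degree = μ * 2 := by
      rw [← hvdeg, ← hadd]
      simp [Finsupp.degree_eq_weight_one, map_add]
    have hcz : ∀ w : Fin n →₀ ℕ, μ < w.degree → coeff w (g j) = 0 := by
      intro w hw
      apply coeff_eq_zero_of_totalDegree_lt
      have h2 : (∑ i ∈ w.support, w i) = w.degree := rfl
      have h3 := hle j
      omega
    simp only
    by_cases h1 : v1.degree = μ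
    · have h2 : v2.degree = μ := by omega
      rw [hG, coeff_homogeneousComponent, coeff_homogeneousComponent, if_pos h1, if_pos h2]
    · rcases Nat.lt_or_ge v1.degree μ with hlt | hge
      · have h2 : μ < v2.degree := by omega
        have hz : coeff v2 (g j) = 0 := hcz v2 h2
        have hz' : coeff v2 (G j) = 0 := by
          rw [hG, coeff_homogeneousComponent, if_neg (by omega)]
        rw [hz, hz', mul_zero, mul_zero]
      · have h1' : μ < v1.degree := lt_of_le_of_ne hge (Ne.symm h1)
        have hz : coeff v1 (g j) = 0 := hcz v1 h1'
        have hz' : coeff v1 (G j) = 0 := by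
          rw [hG, coeff_homogeneousComponent, if_neg h1]
        rw [hz, hz', zero_mul, zero_mul]
  have hPcoeff : coeff v (∑ j, g j ^ 2) ≠ 0 := by
    rw [coeff_sum]
    have : ∀ j ∈ Finset.univ, coeff v (g j ^ 2) = coeff v (G j ^ 2) :=
      fun j _ => hcoeff j
    rw [Finset.sum_congr rfl this, ← coeff_sum]
    exact hv
  have hfin : μ * 2 ≤ 2 * e := by
    have h1 := le_totalDegree (p := ∑ j, g j ^ 2) (s := v) (mem_support_iff.mpr hPcoeff)
    have h2 : (v.sum fun _ e => e) = v.degree := rfl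
    omega
  omega



variable {n : ℕ}

noncomputable def toF (e : ℕ) (a : Fin n → Fin (e + 1)) : Fin n →₀ ℕ :=
  Finsupp.equivFunOnFinite.symm fun i => (a i : ℕ)

lemma toF_inj : Function.Injective (toF (n := n) e) := by
  intro a b hab
  funext i
  have h2 : ((Finsupp.equivFunOnFinite (toF e a)) : Fin n → ℕ) i
      = ((Finsupp.equivFunOnFinite (toF e b)) : Fin n → ℕ) i := by rw [hab]
  simp only [toF, Equiv.apply_symm_apply] at h2
  exact Fin.ext h2

lemma exists_toF {v : Fin n →₀ ℕ} (hv : v.degree ≤ e) : ∃ a : Fin n → Fin (e + 1), toF e a = v := by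
  have hb : ∀ i, v i ≤ e := by
    intro i
    rcases Nat.eq_zero_or_pos (v i) with h0 | hpos
    · omega
    · have hi : i ∈ v.support := Finsupp.mem_support_iff.mpr (by omega)
      have h1 : v i ≤ ∑ j ∈ v.support, v j :=
        Finset.single_le_sum (f := fun j => v j) (fun j _ => Nat.zero_le _) hi
      have h2 : (∑ j ∈ v.support, v j) = v.degree := rfl
      omega
  refine ⟨fun i => ⟨v i, Nat.lt_succ_of_le (hb i)⟩, ?_⟩
  ext i
  simp [toF]

noncomputable def Wpoly (e : ℕ) (w : (Fin n → Fin (e + 1)) → ℝ) : MvPolynomial (Fin n) ℝ :=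
  ∑ a : Fin n → Fin (e + 1), w a • monomial (toF e a) (1 : ℝ)

lemma coeff_Wpoly (w : (Fin n → Fin (e + 1)) → ℝ) (a₀ : Fin n → Fin (e + 1)) :
    coeff (toF e a₀) (Wpoly e w) = w a₀ := by
  classical
  rw [Wpoly, coeff_sum, Finset.sum_eq_single a₀]
  · rw [coeff_smul, coeff_monomial, if_pos rfl, smul_eq_mul, mul_one]
  · intro b _ hb
    rw [coeff_smul, coeff_monomial, if_neg (fun h => hb (toF_inj h)), smul_eq_mul, mul_zero]
  · intro h
    exact absurd (Finset.mem_univ a₀) h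

lemma coeff_Wpoly_ne (w : (Fin n → Fin (e + 1)) → ℝ) {v : Fin n →₀ ℕ}
    (hv : ∀ a : Fin n → Fin (e + 1), toF e a ≠ v) :
    coeff v (Wpoly e w) = 0 := by
  classical
  rw [Wpoly, coeff_sum]
  apply Finset.sum_eq_zero
  intro a _
  rw [coeff_smul, coeff_monomial, if_neg (hv a), smul_eq_mul, mul_zero]

lemma Wpoly_coeff_eq {g : MvPolynomial (Fin n) ℝ} (hg : g.totalDegree ≤ e) :
    Wpoly e (fun a => coeff (toF e a) g) = g := by
  apply MvPolynomial.ext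
  intro v
  by_cases hv : ∃ a : Fin n → Fin (e + 1), toF e a = v
  · obtain ⟨a, rfl⟩ := hv
    rw [coeff_Wpoly]
  · push_neg at hv
    rw [coeff_Wpoly_ne _ hv]
    by_contra hne
    have hmem : v ∈ g.support := mem_support_iff.mpr fun h => hne h.symm
    have hdeg : v.degree ≤ e := by
      have h1 := le_totalDegree hmem
      have h2 : (v.sum fun _ e => e) = v.degree := rfl
      omega
    obtain ⟨a, ha⟩ := exists_toF hdeg
    exact hv a ha

noncomputable def Lmap (e : ℕ) (x : Fin n → ℝ) : ((Fin n → Fin (e + 1)) → ℝ) →ₗ[ℝ] ℝ :=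
  ∑ a : Fin n → Fin (e + 1), eval x (monomial (toF e a) (1 : ℝ)) • LinearMap.proj a

lemma Lmap_apply (x : Fin n → ℝ) (w : (Fin n → Fin (e + 1)) → ℝ) :
    Lmap e x w = ∑ a : Fin n → Fin (e + 1), eval x (monomial (toF e a) (1 : ℝ)) * w a := by
  rw [Lmap, LinearMap.sum_apply]
  refine Finset.sum_congr rfl fun a _ => ?_
  rw [LinearMap.smul_apply, LinearMap.proj_apply, smul_eq_mul]

lemma eval_Wpoly (x : Fin n → ℝ) (w : (Fin n → Fin (e + 1)) → ℝ) :
    eval x (Wpoly e w) = Lmap e x w := by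
  rw [Wpoly, map_sum, Lmap_apply]
  refine Finset.sum_congr rfl fun a _ => ?_
  rw [smul_eq_C_mul, map_mul, eval_C, mul_comm]

lemma exists_points (n e : ℕ) : ∃ X : Finset (Fin n → ℝ),
    ∀ w : (Fin n → Fin (e + 1)) → ℝ, (∀ x ∈ X, Lmap e x w = 0) → w = 0 := by
  classical
  set K : Finset (Fin n → ℝ) → Submodule ℝ ((Fin n → Fin (e + 1)) → ℝ) :=
    fun X => X.inf fun x => LinearMap.ker (Lmap e x) with hK
  have hmem : ∀ (X : Finset (Fin n → ℝ)) (w), w ∈ K X ↔ ∀ x ∈ X, Lmap e x w = 0 := by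
    intro X w
    rw [hK]
    simp [Submodule.mem_finsetInf, LinearMap.mem_ker]
  have hS : (Set.range fun X => Module.finrank ℝ (K X)).Nonempty := ⟨_, ⟨∅, rfl⟩⟩
  obtain ⟨X₀, hX₀⟩ := Nat.sInf_mem hS
  refine ⟨X₀, fun w hw => ?_⟩
  by_contra hw0
  have hwK : w ∈ K X₀ := (hmem X₀ w).mpr hw
  have hWne : Wpoly e w ≠ 0 := by
    intro h0
    apply hw0
    funext a
    have hc := coeff_Wpoly w a
    rw [h0, coeff_zero] at hc
    exact hc.symm
  obtain ⟨x, hx⟩ := exists_eval_ne hWne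
  have hLx : Lmap e x w ≠ 0 := by rwa [← eval_Wpoly]
  have hlt : K (insert x X₀) < K X₀ := by
    apply lt_of_le_of_ne
    · rw [hK]
      simp only [Finset.inf_insert]
      exact inf_le_right
    · intro heq
      have : w ∈ K (insert x X₀) := heq ▸ hwK
      exact hLx ((hmem _ w).mp this x (Finset.mem_insert_self _ _))
  have hrank := Submodule.finrank_lt_finrank_of_lt hlt
  have hX₀' : Module.finrank ℝ (K X₀)
      = sInf (Set.range fun X => Module.finrank ℝ (K X)) := hX₀
  have h2 : Module.finrank ℝ (K X₀) ≤ Module.finrank ℝ (K (insert x X₀)) := by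
    rw [hX₀']
    exact Nat.sInf_le ⟨_, rfl⟩
  omega

lemma points_bound (n e : ℕ) : ∃ (X : Finset (Fin n → ℝ)) (c : ℝ), 0 < c ∧
    ∀ w : (Fin n → Fin (e + 1)) → ℝ, c * ‖w‖ ^ 2 ≤ ∑ x ∈ X, Lmap e x w ^ 2 := by
  obtain ⟨X, hX⟩ := exists_points n e
  set Nf : ((Fin n → Fin (e + 1)) → ℝ) → ℝ := fun w => ∑ x ∈ X, Lmap e x w ^ 2 with hNf
  have hcont : Continuous Nf := by
    apply continuous_finset_sum
    intro x _
    exact ((Lmap e x).continuous_of_finiteDimensional).pow 2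
  have hnn : ∀ w, 0 ≤ Nf w := fun w => Finset.sum_nonneg fun x _ => sq_nonneg _
  have hpos : ∀ w, w ≠ 0 → 0 < Nf w := by
    intro w hw
    rcases lt_or_eq_of_le (hnn w) with h | h
    · exact h
    · exfalso
      apply hw
      apply hX
      intro x hx
      have h0 := (Finset.sum_eq_zero_iff_of_nonneg
        (fun x _ => sq_nonneg (Lmap e x w))).mp h.symm x hx
      exact (pow_eq_zero_iff two_ne_zero).mp h0
  have hsne : (sphere (0 : (Fin n → Fin (e + 1)) → ℝ) 1).Nonempty :=
    NormedSpace.sphere_nonempty.mpr zero_le_one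
  obtain ⟨w₀, hw₀mem, hw₀min'⟩ :=
    (isCompact_sphere (0 : (Fin n → Fin (e + 1)) → ℝ) 1).exists_isMinOn hsne
      hcont.continuousOn
  have hw₀min : ∀ w' ∈ sphere (0 : (Fin n → Fin (e + 1)) → ℝ) 1, Nf w₀ ≤ Nf w' :=
    fun w' hw' => hw₀min' hw'
  have hw₀ne : w₀ ≠ 0 := by
    intro h0
    rw [h0, mem_sphere_zero_iff_norm, norm_zero] at hw₀mem
    norm_num at hw₀mem
  refine ⟨X, Nf w₀, hpos w₀ hw₀ne, fun w => ?_⟩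
  rcases eq_or_ne w 0 with rfl | hw
  · rw [norm_zero]
    simpa using hnn 0
  · have hnorm : ‖w‖ ≠ 0 := norm_ne_zero_iff.mpr hw
    have h2 : (0:ℝ) < ‖w‖ := norm_pos_iff.mpr hw
    have hw'mem : ‖w‖⁻¹ • w ∈ sphere (0 : (Fin n → Fin (e + 1)) → ℝ) 1 := by
      rw [mem_sphere_zero_iff_norm, norm_smul, norm_inv, norm_norm, inv_mul_cancel₀ hnorm]
    have hle := hw₀min _ hw'mem
    have hscale : Nf (‖w‖⁻¹ • w) = (‖w‖⁻¹) ^ 2 * Nf w := by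
      rw [hNf]
      simp only [map_smul, smul_eq_mul, mul_pow]
      rw [Finset.mul_sum]
    rw [hscale] at hle
    have h3 := mul_le_mul_of_nonneg_left hle (le_of_lt (pow_pos h2 2))
    rw [← mul_assoc, ← mul_pow, mul_inv_cancel₀ hnorm, one_pow, one_mul] at h3
    show Nf w₀ * ‖w‖ ^ 2 ≤ Nf w
    linarith [h3]

lemma sum_sq_eq_Phi {J : Type*} [Fintype J] (W : J → (Fin n → Fin (e + 1)) → ℝ) :
    (∑ j, Wpoly e (W j) ^ 2)
      = ∑ a : Fin n → Fin (e + 1), ∑ b : Fin n → Fin (e + 1),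
          (∑ j, W j a * W j b) • monomial (toF e a + toF e b) (1 : ℝ) := by
  have hsq : ∀ j, Wpoly e (W j) ^ 2 = ∑ a : Fin n → Fin (e + 1), ∑ b : Fin n → Fin (e + 1),
      (W j a * W j b) • monomial (toF e a + toF e b) (1 : ℝ) := by
    intro j
    rw [sq, Wpoly, Finset.sum_mul_sum]
    refine Finset.sum_congr rfl fun a _ => Finset.sum_congr rfl fun b _ => ?_
    rw [smul_mul_smul_comm, monomial_mul, one_mul]
  rw [Finset.sum_congr rfl fun j _ => hsq j]
  rw [Finset.sum_comm]
  refine Finset.sum_congr rfl fun a _ => ?_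
  rw [Finset.sum_comm]
  refine Finset.sum_congr rfl fun b _ => ?_
  rw [← Finset.sum_smul]

lemma coeff_Phi (Q : (Fin n → Fin (e + 1)) → (Fin n → Fin (e + 1)) → ℝ) (v : Fin n →₀ ℕ) :
    coeff v (∑ a : Fin n → Fin (e + 1), ∑ b : Fin n → Fin (e + 1),
        Q a b • monomial (toF e a + toF e b) (1 : ℝ))
      = ∑ a : Fin n → Fin (e + 1), ∑ b : Fin n → Fin (e + 1),
          Q a b * (if toF e a + toF e b = v then (1:ℝ) else 0) := by
  classical
  rw [coeff_sum]
  refine Finset.sum_congr rfl fun a _ => ?_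
  rw [coeff_sum]
  refine Finset.sum_congr rfl fun b _ => ?_
  rw [coeff_smul, coeff_monomial, smul_eq_mul]

lemma quad_id {k : ℕ} (W : Fin k → (Fin n → Fin (e + 1)) → ℝ)
    (y : (Fin n → Fin (e + 1)) → ℝ) :
    ∑ a : Fin n → Fin (e + 1), ∑ b : Fin n → Fin (e + 1), y a * (∑ j, W j a * W j b) * y b
      = ∑ j, (∑ a : Fin n → Fin (e + 1), y a * W j a) ^ 2 := by
  calc ∑ a : Fin n → Fin (e + 1), ∑ b : Fin n → Fin (e + 1), y a * (∑ j, W j a * W j b) * y b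
      = ∑ a : Fin n → Fin (e + 1), ∑ b : Fin n → Fin (e + 1), ∑ j,
          y a * (W j a * W j b) * y b := by
        refine Finset.sum_congr rfl fun a _ => Finset.sum_congr rfl fun b _ => ?_
        rw [Finset.mul_sum, Finset.sum_mul]
    _ = ∑ a : Fin n → Fin (e + 1), ∑ j, ∑ b : Fin n → Fin (e + 1),
          y a * (W j a * W j b) * y b :=
        Finset.sum_congr rfl fun a _ => Finset.sum_comm
    _ = ∑ j, ∑ a : Fin n → Fin (e + 1), ∑ b : Fin n → Fin (e + 1),
          y a * (W j a * W j b) * y b := Finset.sum_comm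
    _ = ∑ j, (∑ a : Fin n → Fin (e + 1), y a * W j a) ^ 2 := by
        refine Finset.sum_congr rfl fun j _ => ?_
        rw [sq, Finset.sum_mul_sum]
        exact Finset.sum_congr rfl fun a _ => Finset.sum_congr rfl fun b _ => by ring

lemma sos_closed (e : ℕ) (P : ℕ → MvPolynomial (Fin n) ℝ) (p : MvPolynomial (Fin n) ℝ)
    (hP : ∀ i, ∃ (k : ℕ) (g : Fin k → MvPolynomial (Fin n) ℝ),
      (∀ j, (g j).totalDegree ≤ e) ∧ P i = ∑ j, g j ^ 2)
    (hconv : ∀ v : Fin n →₀ ℕ,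
      Tendsto (fun i => coeff v (P i)) atTop (nhds (coeff v p))) :
    IsSos p := by
  classical
  choose k g hgdeg hPi using hP
  set W : ∀ i : ℕ, Fin (k i) → (Fin n → Fin (e + 1)) → ℝ :=
    fun i j a => coeff (toF e a) (g i j) with hW
  have hgW : ∀ i j, g i j = Wpoly e (W i j) := fun i j => (Wpoly_coeff_eq (hgdeg i j)).symm
  set Q : ℕ → (Fin n → Fin (e + 1)) → (Fin n → Fin (e + 1)) → ℝ :=
    fun i a b => ∑ j, W i j a * W i j b with hQ
  have hPQ : ∀ i, P i = ∑ a : Fin n → Fin (e + 1), ∑ b : Fin n → Fin (e + 1),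
      Q i a b • monomial (toF e a + toF e b) (1 : ℝ) := by
    intro i
    rw [hPi i, Finset.sum_congr rfl fun j _ => by rw [hgW i j], sum_sq_eq_Phi (W i)]
  obtain ⟨Xs, c, hc, hbound⟩ := points_bound n e
  set t : ℕ → ℝ := fun i => ∑ x ∈ Xs, eval x (P i) with ht
  have ht_eq : ∀ i, t i = ∑ j, ∑ x ∈ Xs, Lmap e x (W i j) ^ 2 := by
    intro i
    rw [ht]
    simp only
    rw [Finset.sum_comm]
    refine Finset.sum_congr rfl fun x _ => ?_
    rw [hPi i, map_sum]
    refine Finset.sum_congr rfl fun j _ => ?_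
    rw [map_pow, hgW i j, eval_Wpoly]
  have htnn : ∀ i, 0 ≤ t i := by
    intro i
    rw [ht_eq i]
    exact Finset.sum_nonneg fun j _ => Finset.sum_nonneg fun x _ => sq_nonneg _
  have hQb : ∀ i a b, |Q i a b| ≤ t i / c := by
    intro i a b
    have h1 : |Q i a b| ≤ ∑ j, ‖W i j‖ ^ 2 := by
      rw [hQ]
      refine (Finset.abs_sum_le_sum_abs _ _).trans ?_
      refine Finset.sum_le_sum fun j _ => ?_
      rw [abs_mul, sq]
      have ha : |W i j a| ≤ ‖W i j‖ := by
        rw [← Real.norm_eq_abs]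
        exact norm_le_pi_norm (W i j) a
      have hb : |W i j b| ≤ ‖W i j‖ := by
        rw [← Real.norm_eq_abs]
        exact norm_le_pi_norm (W i j) b
      exact mul_le_mul ha hb (abs_nonneg _) (norm_nonneg _)
    have h2 : c * ∑ j, ‖W i j‖ ^ 2 ≤ t i := by
      rw [ht_eq i, Finset.mul_sum]
      exact Finset.sum_le_sum fun j _ => hbound (W i j)
    have h3 : (∑ j, ‖W i j‖ ^ 2) ≤ t i / c := (le_div_iff₀ hc).mpr (by linarith [h2])
    exact h1.trans h3
  -- convergence of t
  set T₂ : Finset (Fin n →₀ ℕ) :=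
    Finset.image (fun ab : ((Fin n → Fin (e + 1)) × (Fin n → Fin (e + 1))) =>
      toF e ab.1 + toF e ab.2) Finset.univ with hT₂
  have hsupp : ∀ i, (P i).support ⊆ T₂ := by
    intro i v hv
    by_contra hnot
    apply mem_support_iff.mp hv
    rw [hPQ i, coeff_Phi]
    apply Finset.sum_eq_zero
    intro a _
    apply Finset.sum_eq_zero
    intro b _
    rw [if_neg, mul_zero]
    intro heq
    exact hnot (hT₂ ▸ Finset.mem_image.mpr ⟨(a, b), Finset.mem_univ _, heq⟩)
  have heval : ∀ i x, eval x (P i)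
      = ∑ v ∈ T₂, coeff v (P i) * ∏ j ∈ v.support, x j ^ v j := by
    intro i x
    rw [eval_eq]
    refine Finset.sum_subset (hsupp i) fun v _ hnot => ?_
    rw [notMem_support_iff.mp hnot, zero_mul]
  have htconv : Tendsto t atTop (nhds (∑ x ∈ Xs, ∑ v ∈ T₂,
      coeff v p * ∏ j ∈ v.support, x j ^ v j)) := by
    have he : t = fun i => ∑ x ∈ Xs, ∑ v ∈ T₂,
        coeff v (P i) * ∏ j ∈ v.support, x j ^ v j :=
      funext fun i => Finset.sum_congr rfl fun x _ => heval i x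
    rw [he]
    apply tendsto_finset_sum
    intro x _
    apply tendsto_finset_sum
    intro v _
    exact (hconv v).mul_const _
  obtain ⟨Ct, hCt⟩ := htconv.bddAbove_range
  have hCt' : ∀ i, t i ≤ Ct := fun i => hCt (Set.mem_range_self i)
  set Cb : ℝ := max (Ct / c) 0 with hCb
  have hmemball : ∀ i, (fun ab : ((Fin n → Fin (e + 1)) × (Fin n → Fin (e + 1))) =>
      Q i ab.1 ab.2) ∈ closedBall (0 : ((Fin n → Fin (e + 1)) × (Fin n → Fin (e + 1))) → ℝ) Cb := by
    intro i
    rw [mem_closedBall_zero_iff, pi_norm_le_iff_of_nonneg (le_max_right _ _)]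
    intro ab
    rw [Real.norm_eq_abs]
    refine (hQb i ab.1 ab.2).trans (le_trans ?_ (le_max_left _ _))
    exact (div_le_div_iff_of_pos_right hc).mpr (hCt' i)
  obtain ⟨Qi, hQimem, φ, hφmono, hQconv⟩ :=
    (isCompact_closedBall (0 : ((Fin n → Fin (e + 1)) × (Fin n → Fin (e + 1))) → ℝ)
      Cb).tendsto_subseq hmemball
  have hentry : ∀ a b, Tendsto (fun i => Q (φ i) a b) atTop (nhds (Qi (a, b))) := by
    intro a b
    exact ((continuous_apply (a, b)).tendsto Qi).comp hQconv
  have hpcoeff : ∀ v, coeff v p = ∑ a : Fin n → Fin (e + 1), ∑ b : Fin n → Fin (e + 1),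
      Qi (a, b) * (if toF e a + toF e b = v then (1:ℝ) else 0) := by
    intro v
    have h1 : Tendsto (fun i => coeff v (P (φ i))) atTop (nhds (coeff v p)) :=
      (hconv v).comp hφmono.tendsto_atTop
    have h2 : Tendsto (fun i => coeff v (P (φ i))) atTop
        (nhds (∑ a : Fin n → Fin (e + 1), ∑ b : Fin n → Fin (e + 1),
          Qi (a, b) * (if toF e a + toF e b = v then (1:ℝ) else 0))) := by
      have he : (fun i => coeff v (P (φ i)))
          = fun i => ∑ a : Fin n → Fin (e + 1), ∑ b : Fin n → Fin (e + 1),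
              Q (φ i) a b * (if toF e a + toF e b = v then (1:ℝ) else 0) :=
        funext fun i => by rw [hPQ (φ i), coeff_Phi]
      rw [he]
      apply tendsto_finset_sum
      intro a _
      apply tendsto_finset_sum
      intro b _
      exact (hentry a b).mul_const _
    exact tendsto_nhds_unique h1 h2
  have hsym : ∀ a b, Qi (a, b) = Qi (b, a) := by
    intro a b
    refine tendsto_nhds_unique (hentry a b) ?_
    have he : (fun i => Q (φ i) a b) = fun i => Q (φ i) b a := by
      funext i
      rw [hQ]
      exact Finset.sum_congr rfl fun j _ => mul_comm _ _
    rw [he]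
    exact hentry b a
  have hquad : ∀ y : (Fin n → Fin (e + 1)) → ℝ,
      0 ≤ ∑ a : Fin n → Fin (e + 1), ∑ b : Fin n → Fin (e + 1), y a * Qi (a, b) * y b := by
    intro y
    have hlim : Tendsto (fun i => ∑ a : Fin n → Fin (e + 1), ∑ b : Fin n → Fin (e + 1),
        y a * Q (φ i) a b * y b) atTop
        (nhds (∑ a : Fin n → Fin (e + 1), ∑ b : Fin n → Fin (e + 1), y a * Qi (a, b) * y b)) := by
      apply tendsto_finset_sum
      intro a _
      apply tendsto_finset_sum
      intro b _
      exact ((hentry a b).const_mul _).mul_const _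
    refine ge_of_tendsto hlim (Eventually.of_forall fun i => ?_)
    have hq : ∀ a b, Q (φ i) a b = ∑ j, W (φ i) j a * W (φ i) j b := fun a b => rfl
    calc (0:ℝ) ≤ ∑ j, (∑ a : Fin n → Fin (e + 1), y a * W (φ i) j a) ^ 2 :=
          Finset.sum_nonneg fun j _ => sq_nonneg _
      _ = ∑ a : Fin n → Fin (e + 1), ∑ b : Fin n → Fin (e + 1), y a * Q (φ i) a b * y b := by
          rw [← quad_id (W (φ i)) y]
  set M : Matrix (Fin n → Fin (e + 1)) (Fin n → Fin (e + 1)) ℝ :=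
    Matrix.of fun a b => Qi (a, b) with hM
  have hherm : M.IsHermitian := by
    unfold Matrix.IsHermitian
    ext a b
    rw [Matrix.conjTranspose_apply, star_trivial]
    exact (hsym b a)
  have hpsd : M.PosSemidef := by
    refine Matrix.PosSemidef.of_dotProduct_mulVec_nonneg hherm fun y => ?_
    have hdot : dotProduct (star y) (M.mulVec y)
        = ∑ a : Fin n → Fin (e + 1), ∑ b : Fin n → Fin (e + 1), y a * Qi (a, b) * y b := by
      simp only [dotProduct, Matrix.mulVec, Pi.star_apply, star_trivial]
      refine Finset.sum_congr rfl fun a _ => ?_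
      rw [Finset.mul_sum]
      refine Finset.sum_congr rfl fun b _ => ?_
      rw [hM]
      simp only [Matrix.of_apply]
      ring
    rw [hdot]
    exact hquad y
  obtain ⟨B, hB⟩ : ∃ B : Matrix (Fin n → Fin (e + 1)) (Fin n → Fin (e + 1)) ℝ,
      M = B.conjTranspose * B := by
    open scoped MatrixOrder in exact (CStarAlgebra.nonneg_iff_eq_star_mul_self.mp hpsd.nonneg).imp fun B hB => hB
  have hQB : ∀ a b, Qi (a, b) = ∑ r : Fin n → Fin (e + 1), B r a * B r b := by
    intro a b
    have h1 : M a b = (B.conjTranspose * B) a b := by rw [hB]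
    rw [Matrix.mul_apply] at h1
    simpa [hM, Matrix.conjTranspose_apply] using h1
  have hfinal : p = ∑ r : Fin n → Fin (e + 1), Wpoly e (fun a => B r a) ^ 2 := by
    apply MvPolynomial.ext
    intro v
    rw [hpcoeff v, sum_sq_eq_Phi (fun r a => B r a), coeff_Phi]
    exact Finset.sum_congr rfl fun a _ => Finset.sum_congr rfl fun b _ => by rw [hQB]
  rw [hfinal]
  exact sos_of_fintype _

end SosAux

/-- If there is a psd form of degree m in n variables that is not sos, then no finite
set of nonzero forms h₁,…,h_N can have the property that for every psd form p of
degree m some hₖ·p is sos. -/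
theorem no_finite_set_of_denominators (n m : ℕ) (hn : 1 ≤ n) (hm : Even m) (hm0 : 0 < m)
    (hΔ : ∃ p : MvPolynomial (Fin n) ℝ, p.IsHomogeneous m ∧ Psd p ∧ ¬ IsSos p) :
    ¬ ∃ (N : ℕ) (h : Fin N → MvPolynomial (Fin n) ℝ),
      (∀ k, h k ≠ 0 ∧ ∃ d : ℕ, (h k).IsHomogeneous d) ∧
      ∀ p : MvPolynomial (Fin n) ℝ, p.IsHomogeneous m → Psd p →
        ∃ k, IsSos (h k * p) := by
  classical
  obtain ⟨q, hqh, hqpsd, hqns⟩ := hΔ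
  rintro ⟨N, h, hne, hyp⟩
  have hq0 : q ≠ 0 := fun h0 => hqns (by rw [h0]; exact SosAux.sos_zero)
  set i₀ : Fin n := ⟨0, hn⟩ with hi₀
  have hprod : (X i₀ * ∏ k, h k : MvPolynomial (Fin n) ℝ) ≠ 0 :=
    mul_ne_zero (MvPolynomial.X_ne_zero i₀) (Finset.prod_ne_zero_iff.mpr fun k _ => (hne k).1)
  obtain ⟨u, hu⟩ := SosAux.exists_eval_ne hprod
  rw [map_mul, map_prod] at hu
  obtain ⟨hu1, hu2⟩ := mul_ne_zero_iff.mp hu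
  have hu0 : u i₀ ≠ 0 := by rwa [eval_X] at hu1
  have huk : ∀ k, eval u (h k) ≠ 0 := fun k =>
    Finset.prod_ne_zero_iff.mp hu2 k (Finset.mem_univ k)
  set c : Fin n → ℝ := fun i => u i / u i₀ with hc
  have hci₀ : c i₀ = 1 := div_self hu0
  set f : ℝ → Fin n → MvPolynomial (Fin n) ℝ :=
    fun t i => t • X i + ((1 - t) * c i) • X i₀ with hf
  have hcomp : ∀ s t (p : MvPolynomial (Fin n) ℝ),
      aeval (f s) (aeval (f t) p) = aeval (f (t * s)) p := by
    intro s t p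
    have hhom : (aeval (f s)).comp (aeval (f t)) = (aeval (f (t * s)) :
        MvPolynomial (Fin n) ℝ →ₐ[ℝ] MvPolynomial (Fin n) ℝ) := by
      apply MvPolynomial.algHom_ext
      intro i
      simp only [AlgHom.comp_apply, aeval_X, hf]
      simp only [map_add, map_smul, aeval_X]
      rw [hci₀]
      match_scalars <;> ring
    exact DFunLike.congr_fun hhom p
  have hid : ∀ p : MvPolynomial (Fin n) ℝ, aeval (f 1) p = p := by
    intro p
    have hfx : f 1 = X := by
      funext i
      rw [hf]
      simp
    rw [hfx, aeval_X_left_apply]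
  have hfh : ∀ t i, (f t i).IsHomogeneous 1 := by
    intro t i
    rw [hf]
    simp only [smul_eq_C_mul]
    apply MvPolynomial.IsHomogeneous.add
    · simpa using (isHomogeneous_C (Fin n) t).mul (isHomogeneous_X ℝ i)
    · simpa using (isHomogeneous_C (Fin n) ((1 - t) * c i)).mul (isHomogeneous_X ℝ i₀)
  have hσh : ∀ t : ℝ, (aeval (f t) q).IsHomogeneous m := by
    intro t
    simpa using hqh.aeval (f t) (hfh t)
  have hσpsd : ∀ t : ℝ, Psd (aeval (f t) q) := by
    intro t x
    rw [SosAux.eval_aeval']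
    exact hqpsd _
  have hKex : ∀ j : ℕ, ∃ k, IsSos (h k * aeval (f ((j : ℝ) + 1)) q) := fun j =>
    hyp _ (hσh _) (hσpsd _)
  choose K hK using hKex
  obtain ⟨k₀, hk₀⟩ := Finite.exists_infinite_fiber K
  haveI := hk₀
  set φ0 : ℕ → ℕ := fun i => ((Infinite.natEmbedding (K ⁻¹' {k₀} : Set ℕ)) i : ℕ) with hφ0
  have hφ0mem : ∀ i, K (φ0 i) = k₀ := by
    intro i
    have h2 : K (φ0 i) ∈ ({k₀} : Set (Fin N)) :=
      (Infinite.natEmbedding (K ⁻¹' {k₀} : Set ℕ) i).2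
    simpa using h2
  have hφ0inj : Function.Injective φ0 := fun a b hab =>
    (Infinite.natEmbedding (K ⁻¹' {k₀} : Set ℕ)).injective (Subtype.ext hab)
  have hφ0t : Tendsto φ0 atTop atTop := by
    have := hφ0inj.tendsto_cofinite
    rwa [Nat.cofinite_eq_atTop] at this
  set γ : ℕ → ℝ := fun j => ((j : ℝ) + 1)⁻¹ with hγ
  have hsosP : ∀ i : ℕ, IsSos (aeval (f (γ (φ0 i))) (h k₀) * q) := by
    intro i
    have h1 : IsSos (h k₀ * aeval (f ((φ0 i : ℝ) + 1)) q) := by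
      have h2 := hK (φ0 i)
      rwa [hφ0mem i] at h2
    have h2 := SosAux.sos_map (aeval (f (γ (φ0 i)))) h1
    rw [map_mul, hcomp] at h2
    rw [show ((φ0 i : ℝ) + 1) * γ (φ0 i) = 1 by
      rw [hγ]
      exact mul_inv_cancel₀ (by positivity)] at h2
    rwa [hid] at h2
  obtain ⟨d, hhd⟩ := (hne k₀).2
  have hf0 : f 0 = fun i => C (c i) * X i₀ := by
    funext i
    rw [hf]
    simp [smul_eq_C_mul]
  set b : ℝ := eval c (h k₀) with hb
  have htar : aeval (f 0) (h k₀) = C b * X i₀ ^ d := by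
    rw [hf0, hb]
    exact SosAux.aeval_line hhd c i₀
  have hb0 : b ≠ 0 := by
    have hcu : c = (u i₀)⁻¹ • u := by
      funext i
      rw [hc]
      simp [div_eq_inv_mul]
    rw [hb, hcu, SosAux.hom_eval_smul hhd]
    exact mul_ne_zero (pow_ne_zero _ (inv_ne_zero hu0)) (huk k₀)
  have hsos0 : IsSos (aeval (f 0) (h k₀) * q) := by
    apply SosAux.sos_closed (d + m) (fun i => aeval (f (γ (φ0 i))) (h k₀) * q)
    · intro i
      apply SosAux.sos_bounded (hsosP i)
      have h1 : (aeval (f (γ (φ0 i))) (h k₀)).totalDegree ≤ d := by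
        have hh : (aeval (f (γ (φ0 i))) (h k₀)).IsHomogeneous d := by
          simpa using hhd.aeval _ (hfh _)
        exact hh.totalDegree_le
      have h2 : q.totalDegree ≤ m := hqh.totalDegree_le
      calc (aeval (f (γ (φ0 i))) (h k₀) * q).totalDegree
          ≤ (aeval (f (γ (φ0 i))) (h k₀)).totalDegree + q.totalDegree :=
            totalDegree_mul _ _
        _ ≤ 2 * (d + m) := by omega
    · intro v
      simp only [hf]
      have hcont : Continuous fun t : ℝ =>
          (coeff v ((aeval fun i => t • X i + ((1 - t) * c i) • X i₀) (h k₀) * q) : ℝ) := by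
        have he : (fun t : ℝ =>
            (coeff v ((aeval fun i => t • X i + ((1 - t) * c i) • X i₀) (h k₀) * q) : ℝ))
            = fun t => ∑ x ∈ Finset.HasAntidiagonal.antidiagonal v,
                coeff x.1 ((aeval fun i => t • X i + ((1 - t) * c i) • X i₀) (h k₀))
                  * coeff x.2 q := by
          funext t
          rw [coeff_mul]
        rw [he]
        apply continuous_finset_sum
        intro x _
        exact (SosAux.cont_coeff_aeval c i₀ (h k₀) x.1).mul continuous_const
      have hγt : Tendsto (fun i => γ (φ0 i)) atTop (nhds 0) := by
        have h1 : Tendsto γ atTop (nhds 0) := by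
          rw [hγ]
          simpa [one_div] using tendsto_one_div_add_atTop_nhds_zero_nat (𝕜 := ℝ)
        exact h1.comp hφ0t
      exact (hcont.tendsto 0).comp hγt
  rw [htar] at hsos0
  have hqX : (q * X i₀ : MvPolynomial (Fin n) ℝ) ≠ 0 :=
    mul_ne_zero hq0 (MvPolynomial.X_ne_zero i₀)
  obtain ⟨x, hx⟩ := SosAux.exists_eval_ne hqX
  rw [map_mul, eval_X] at hx
  have hxq : 0 < eval x q := lt_of_le_of_ne (hqpsd x) (by
    intro h0
    apply hx
    rw [← h0, zero_mul])
  have hxX : x i₀ ≠ 0 := by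
    intro h0
    apply hx
    rw [h0, mul_zero]
  have hpsd0 := SosAux.sos_psd hsos0
  have e1 : 0 ≤ b * x i₀ ^ d * eval x q := by
    have h1 := hpsd0 x
    rwa [map_mul, map_mul, eval_C, map_pow, eval_X] at h1
  have e2 : 0 ≤ b * (-(x i₀)) ^ d * eval x q := by
    have h2 := hpsd0 (-x)
    rw [map_mul, map_mul, eval_C, map_pow, eval_X] at h2
    have hnegq : eval (-x) q = eval x q := by
      have hs : (-x) = (-1 : ℝ) • x := by
        funext i
        simp
      rw [hs, SosAux.hom_eval_smul hqh, hm.neg_one_pow, one_mul]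
    have hnegX : (-x) i₀ = -(x i₀) := rfl
    rwa [hnegq, hnegX] at h2
  have hdeven : Even d := by
    by_contra hodd
    rw [Nat.not_even_iff_odd] at hodd
    rw [hodd.neg_pow] at e2
    have hz : b * x i₀ ^ d * eval x q = 0 := by nlinarith [e1, e2]
    exact mul_ne_zero (mul_ne_zero hb0 (pow_ne_zero _ hxX)) (ne_of_gt hxq) hz
  have hbpos : 0 < b := by
    have hxpow : 0 < x i₀ ^ d := hdeven.pow_pos hxX
    have hP : 0 < x i₀ ^ d * eval x q := mul_pos hxpow hxq
    rcases lt_trichotomy b 0 with hlt | heq | hgt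
    · exfalso
      have hneg : b * (x i₀ ^ d * eval x q) < 0 := mul_neg_of_neg_of_pos hlt hP
      rw [← mul_assoc] at hneg
      linarith [e1]
    · exact absurd heq hb0
    · exact hgt
  have hsos1 : IsSos (X i₀ ^ d * q) := by
    have h3 := SosAux.sos_C_mul (a := b⁻¹) (by positivity) hsos0
    have e : C b⁻¹ * (C b * X i₀ ^ d * q)
        = (C b⁻¹ * C b : MvPolynomial (Fin n) ℝ) * (X i₀ ^ d * q) := by ring
    rw [e, ← map_mul, inv_mul_cancel₀ hb0, map_one, one_mul] at h3
    exact h3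
  obtain ⟨r, hr⟩ := hdeven
  have hsos2 : IsSos q := by
    apply SosAux.sos_of_X_pow_mul i₀ r
    rwa [show 2 * r = d by omega]
  exact hqns hsos2
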